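/- With the setting of the previous statement, for I, J with I_{π(n-1)} = J_{π(n-1)}, u the largest index with I_{π(u)} ≠ J_{π(u)}, and J^k defined from J the same way I^k is from I (so that I^k - J^k = I - J), one has (H(I) - H(J)) - (H(I^k) - H(J^k)) ≡ (q/p)·k·(I_{π(u)} - J_{π(u)}) mod q, since I_{π(u+2)} = J_{π(u+2)} (or u = n-2). Consequently, ∑_{k=0}^{p-1} ζ_q^{(H(I)-H(J)) - (H(I^k)-H(J^k))} = ∑_{k=0}^{p-1} ζ_p^{k·(I_{π(u)}-J_{π(u)})} = 0, where I^0 = I, J^0 = J. -/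

import Mathlib

/-- `ζ_q^e` for an integer exponent `e`. -/
noncomputable def zeta (q : ℕ) (e : ℤ) : ℂ :=
  Complex.exp (2 * Real.pi * Complex.I * (e : ℂ) / (q : ℂ))

/-- the `i`-th base-`p` digit of `I`, for vectors of length `m`. -/
def dgt (p m i I : ℕ) : ℕ := I / p ^ (m - 1 - i) % p

/-- `H(x) = (q/p)·∑_{i=1}^{n-1} x_{π(i-1)}x_{π(i)} + ∑ γ_i x_i + θ`. -/
def Hval (p q n : ℕ) (π : Equiv.Perm (Fin n)) (γ : Fin n → ℕ) (θ : ℕ)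
    (x : Fin n → ℕ) : ℤ :=
  ((q / p : ℕ) : ℤ) *
    (∑ i : Fin n, if h : 1 ≤ (i : ℕ) then
        (x (π ⟨(i : ℕ) - 1, by omega⟩) : ℤ) * (x (π i) : ℤ) else 0)
  + ∑ i : Fin n, (γ i : ℤ) * (x i : ℤ) + (θ : ℤ)

/-- the digit vector of `I^k`: the base-`p` digits of `I`, with the digit at position
`π(w)` replaced by `(I_{π(w)} - k) mod p`.  For `k = 0` this is the digit vector of `I`. -/
def modDig (p n : ℕ) (π : Equiv.Perm (Fin n)) (w : Fin n) (k I : ℕ) : Fin n → ℕ :=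
  fun i => if i = π w then (dgt p n (π w) I + (p - k)) % p else dgt p n i I

/-! Changing the single coordinate `x_{π(u+1)}` to `c'` changes `H` by
`((q/p)(x_{π(u)} + x_{π(u+2)}) + γ_{π(u+1)}) (x_{π(u+1)} - c')`, the second neighbour being
absent when `u + 2 = n`. As `I` and `J` agree at `π(u+1)` and `π(u+2)`, the difference of these
changes for `I` and `J` is `(q/p)(I_{π(u)} - J_{π(u)})(c - c_k)`, where `c = I_{π(u+1)}` and the
shifted digit `c_k` is `≡ c - k (mod p)`; this gives the congruence mod `q`. Then
`ζ_q^{(q/p)m} = ζ_p^m`, and `∑_k ζ_p^{kd} = 0` because `ζ_p^d ≠ 1` is a `p`-th root of unity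
when `0 < |d| < p`. -/

lemma zeta_add (q : ℕ) (a b : ℤ) : zeta q (a + b) = zeta q a * zeta q b := by
  rw [zeta, zeta, zeta, ← Complex.exp_add]
  congr 1
  push_cast
  ring

lemma zeta_natCast_mul (q k : ℕ) (e : ℤ) : zeta q (k * e) = zeta q e ^ k := by
  rw [zeta, zeta, ← Complex.exp_nat_mul]
  congr 1
  push_cast
  ring

lemma zeta_eq_one_iff {q : ℕ} (hq : q ≠ 0) (e : ℤ) : zeta q e = 1 ↔ (q : ℤ) ∣ e := by
  rw [← (Complex.isPrimitiveRoot_exp q hq).zpow_eq_one_iff_dvd, zeta, ← Complex.exp_int_mul]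
  congr! 2
  ring

lemma zeta_eq_of_modEq {q : ℕ} {a b : ℤ} (h : a ≡ b [ZMOD q]) : zeta q a = zeta q b := by
  rcases eq_or_ne q 0 with rfl | hq
  · rw [Nat.cast_zero, Int.modEq_zero_iff] at h
    rw [h]
  obtain ⟨t, ht⟩ := h.dvd
  rw [show b = a + q * t by omega, zeta_add, (zeta_eq_one_iff hq _).mpr (dvd_mul_right _ _),
    mul_one]

lemma zeta_natDiv_mul {p q : ℕ} (hq : q ≠ 0) (hpq : p ∣ q) (m : ℤ) :
    zeta q ((q / p : ℕ) * m) = zeta p m := by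
  obtain ⟨c, rfl⟩ := hpq
  have hp : p ≠ 0 := left_ne_zero_of_mul hq
  have hc : c ≠ 0 := right_ne_zero_of_mul hq
  rw [Nat.mul_div_cancel_left _ (Nat.pos_of_ne_zero hp), zeta, zeta]
  congr 1
  push_cast
  field_simp

lemma sum_range_zeta_mul_eq_zero {p : ℕ} {d : ℤ} (hd : d ≠ 0) (hdp : d.natAbs < p) :
    ∑ k ∈ Finset.range p, zeta p (k * d) = 0 := by
  have hp : p ≠ 0 := by omega
  have hne : zeta p d ≠ 1 := by
    rw [Ne, zeta_eq_one_iff hp]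
    exact fun h ↦ (Int.natAbs_le_of_dvd_ne_zero h hd).not_gt hdp
  have hpow : zeta p d ^ p = 1 := by
    rw [← zeta_natCast_mul, zeta_eq_one_iff hp]
    exact dvd_mul_right _ _
  simp_rw [zeta_natCast_mul]
  rw [geom_sum_eq hne, hpow, sub_self, zero_div]

def chainSum {n : ℕ} (z : Fin n → ℤ) : ℤ :=
  ∑ i : Fin n, if h : 1 ≤ (i : ℕ) then z ⟨(i : ℕ) - 1, by omega⟩ * z i else 0

lemma chainSum_sub_chainSum {n j : ℕ} (hj : j + 1 < n) {z z' : Fin n → ℤ}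
    (h : ∀ i : Fin n, (i : ℕ) ≠ j + 1 → z' i = z i) :
    chainSum z - chainSum z' =
      (z ⟨j, by omega⟩ + if h : j + 2 < n then z ⟨j + 2, h⟩ else 0) *
        (z ⟨j + 1, hj⟩ - z' ⟨j + 1, hj⟩) := by
  set δ := z ⟨j + 1, hj⟩ - z' ⟨j + 1, hj⟩
  have hterm : ∀ i : Fin n,
      ((if h : 1 ≤ (i : ℕ) then z ⟨(i : ℕ) - 1, by omega⟩ * z i else 0) -
        if h : 1 ≤ (i : ℕ) then z' ⟨(i : ℕ) - 1, by omega⟩ * z' i else 0) =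
      (if i = ⟨j + 1, hj⟩ then z ⟨j, by omega⟩ * δ else 0) +
        if (i : ℕ) = j + 2 then z i * δ else 0 := by
    rintro ⟨i, hi⟩
    obtain rfl | rfl | ⟨h1, h2⟩ : i = j + 1 ∨ i = j + 2 ∨ (i ≠ j + 1 ∧ i ≠ j + 2) := by omega
    · simp [h, δ]
      ring
    · simp [h, δ]
      ring
    · simp [h, h1, h2]
  unfold chainSum
  rw [← Finset.sum_sub_distrib, Finset.sum_congr rfl fun i _ => hterm i, Finset.sum_add_distrib,
    Fintype.sum_ite_eq', add_mul]
  congr 1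
  split_ifs with hlt
  · rw [Fintype.sum_eq_single ⟨j + 2, hlt⟩ fun i hi ↦ if_neg (by simpa [Fin.ext_iff] using hi),
      if_pos rfl]
  · rw [zero_mul]
    exact Finset.sum_eq_zero fun (i : Fin n) _ ↦ if_neg (by have := i.isLt; omega)

lemma Hval_eq (p q n : ℕ) (π : Equiv.Perm (Fin n)) (γ : Fin n → ℕ) (θ : ℕ) (x : Fin n → ℕ) :
    Hval p q n π γ θ x =
      (q / p : ℕ) * chainSum (fun i ↦ (x (π i) : ℤ)) + ∑ i, (γ i : ℤ) * x i + θ :=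
  rfl

lemma Hval_sub_Hval {p q n j : ℕ} (hj : j + 1 < n) (π : Equiv.Perm (Fin n)) (γ : Fin n → ℕ)
    (θ : ℕ) {x y : Fin n → ℕ} (h : ∀ i, i ≠ π ⟨j + 1, hj⟩ → y i = x i) :
    Hval p q n π γ θ x - Hval p q n π γ θ y =
      ((q / p : ℕ) * (x (π ⟨j, by omega⟩) + if h : j + 2 < n then (x (π ⟨j + 2, h⟩) : ℤ) else 0)
        + γ (π ⟨j + 1, hj⟩)) * (x (π ⟨j + 1, hj⟩) - y (π ⟨j + 1, hj⟩)) := by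
  have hquad := chainSum_sub_chainSum hj (z := fun i ↦ (x (π i) : ℤ))
    (z' := fun i ↦ (y (π i) : ℤ)) fun i hi ↦ by
      rw [h (π i) fun e ↦ hi (by rw [π.injective e])]
  have hlin : ∑ i, (γ i : ℤ) * x i - ∑ i, (γ i : ℤ) * y i =
      γ (π ⟨j + 1, hj⟩) * (x (π ⟨j + 1, hj⟩) - y (π ⟨j + 1, hj⟩)) := by
    rw [← Finset.sum_sub_distrib, Fintype.sum_eq_single (π ⟨j + 1, hj⟩) fun i hi ↦ by
      rw [h i hi, sub_self]]
    ring
  rw [Hval_eq, Hval_eq]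
  linear_combination ((q / p : ℕ) : ℤ) * hquad + hlin

lemma modDig_of_ne {p n : ℕ} (π : Equiv.Perm (Fin n)) {w i : Fin n} (k I : ℕ) (hi : i ≠ π w) :
    modDig p n π w k I i = dgt p n i I :=
  if_neg hi

lemma dgt_sub_modDig_modEq {p n k : ℕ} (π : Equiv.Perm (Fin n)) (w : Fin n) (hk : k ≤ p)
    (I : ℕ) : (dgt p n (π w) I : ℤ) - modDig p n π w k I (π w) ≡ k [ZMOD p] := by
  rw [modDig, if_pos rfl, Int.natCast_mod, Nat.cast_add, Nat.cast_sub hk]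
  calc _ ≡ (dgt p n (π w) I : ℤ) - (dgt p n (π w) I + (p - k)) [ZMOD p] :=
        (Int.mod_modEq _ _).sub_left _
    _ = k + p * (-1) := by ring
    _ ≡ k [ZMOD p] := Int.modEq_add_fac_self

/-- `(H(I) - H(J)) - (H(I^k) - H(J^k))`, where `I^k, J^k` shift the digit at `π w`. -/
def shiftDiff (p q n : ℕ) (π : Equiv.Perm (Fin n)) (γ : Fin n → ℕ) (θ : ℕ) (w : Fin n)
    (k I J : ℕ) : ℤ :=
  (Hval p q n π γ θ (fun i ↦ dgt p n i I) - Hval p q n π γ θ (fun i ↦ dgt p n i J)) -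
    (Hval p q n π γ θ (modDig p n π w k I) - Hval p q n π γ θ (modDig p n π w k J))

lemma shiftDiff_eq {p q n u : ℕ} (hu : u + 2 ≤ n) (π : Equiv.Perm (Fin n)) (γ : Fin n → ℕ)
    (θ : ℕ) {I J : ℕ} (hIJ : ∀ v : Fin n, u < (v : ℕ) → dgt p n (π v) I = dgt p n (π v) J)
    (k : ℕ) :
    shiftDiff p q n π γ θ ⟨u + 1, by omega⟩ k I J =
      (q / p : ℕ) * ((dgt p n (π ⟨u, by omega⟩) I : ℤ) - dgt p n (π ⟨u, by omega⟩) J) *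
        (dgt p n (π ⟨u + 1, by omega⟩) I -
          modDig p n π ⟨u + 1, by omega⟩ k I (π ⟨u + 1, by omega⟩)) := by
  set w : Fin n := ⟨u + 1, by omega⟩
  have hw : dgt p n (π w) J = dgt p n (π w) I := (hIJ w (Nat.lt_succ_self u)).symm
  have hwk : modDig p n π w k J (π w) = modDig p n π w k I (π w) := by
    rw [modDig, modDig, if_pos rfl, if_pos rfl, hw]
  have hnext : (if h : u + 2 < n then (dgt p n (π ⟨u + 2, h⟩) J : ℤ) else 0) =
      if h : u + 2 < n then (dgt p n (π ⟨u + 2, h⟩) I : ℤ) else 0 := by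
    split_ifs with h
    · rw [hIJ ⟨u + 2, h⟩ (by simp)]
    · rfl
  have hI := Hval_sub_Hval (p := p) (q := q) (by omega : u + 1 < n) π γ θ
    (x := fun i ↦ dgt p n i I) fun i ↦ modDig_of_ne π k I
  have hJ := Hval_sub_Hval (p := p) (q := q) (by omega : u + 1 < n) π γ θ
    (x := fun i ↦ dgt p n i J) fun i ↦ modDig_of_ne π k J
  rw [hw, hwk, hnext] at hJ
  rw [shiftDiff]
  linear_combination hI - hJ

lemma shiftDiff_modEq {p q n u : ℕ} (hpq : p ∣ q) (hu : u + 2 ≤ n) (π : Equiv.Perm (Fin n))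
    (γ : Fin n → ℕ) (θ : ℕ) {I J : ℕ}
    (hIJ : ∀ v : Fin n, u < (v : ℕ) → dgt p n (π v) I = dgt p n (π v) J) {k : ℕ} (hk : k ≤ p) :
    shiftDiff p q n π γ θ ⟨u + 1, by omega⟩ k I J ≡
      (q / p : ℕ) * k * ((dgt p n (π ⟨u, by omega⟩) I : ℤ) - dgt p n (π ⟨u, by omega⟩) J)
        [ZMOD q] := by
  have h := ((dgt_sub_modDig_modEq π ⟨u + 1, by omega⟩ hk I).mul_left'
    (c := (q / p : ℕ))).mul_right ((dgt p n (π ⟨u, by omega⟩) I : ℤ) - dgt p n (π ⟨u, by omega⟩) J)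
  rw [← Nat.cast_mul, Nat.div_mul_cancel hpq] at h
  rw [shiftDiff_eq hu π γ θ hIJ]
  convert h using 1
  ring

lemma sum_range_zeta_eq_of_modEq {p q : ℕ} (hq : q ≠ 0) (hpq : p ∣ q) {f : ℕ → ℤ} {d : ℤ}
    (hf : ∀ k < p, f k ≡ (q / p : ℕ) * k * d [ZMOD q]) :
    ∑ k ∈ Finset.range p, zeta q (f k) = ∑ k ∈ Finset.range p, zeta p (k * d) := by
  refine Finset.sum_congr rfl fun k hk ↦ ?_
  rw [zeta_eq_of_modEq (hf k (Finset.mem_range.mp hk)), mul_assoc, zeta_natDiv_mul hq hpq]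

/-- With `I_{π(n-1)} = J_{π(n-1)}`, `u ≤ n-2` the largest index with
`I_{π(u)} ≠ J_{π(u)}`, and `I^k, J^k` obtained by replacing digit `π(u+1)` by its shift
by `-k mod p`, one has
`(H(I)-H(J)) - (H(I^k)-H(J^k)) ≡ (q/p)·k·(I_{π(u)} - J_{π(u)}) mod q`, and consequently
`∑_{k=0}^{p-1} ζ_q^{(H(I)-H(J)) - (H(I^k)-H(J^k))} = ∑_{k=0}^{p-1} ζ_p^{k(I_{π(u)}-J_{π(u)})} = 0`. -/
theorem stmt_8 (p q n : ℕ) (hq : 0 < q) (hpq : p ∣ q)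
    (π : Equiv.Perm (Fin n)) (γ : Fin n → ℕ) (θ : ℕ)
    (I J : ℕ)
    (u : ℕ) (hu : u + 2 ≤ n)
    (hdiff : dgt p n (π ⟨u, by omega⟩) I ≠ dgt p n (π ⟨u, by omega⟩) J)
    (hlargest : ∀ v : Fin n, u < (v : ℕ) → dgt p n (π v) I = dgt p n (π v) J) :
    (∀ k ≤ p - 1,
      (Hval p q n π γ θ (fun i => dgt p n i I) - Hval p q n π γ θ (fun i => dgt p n i J))
        - (Hval p q n π γ θ (modDig p n π ⟨u + 1, by omega⟩ k I)
            - Hval p q n π γ θ (modDig p n π ⟨u + 1, by omega⟩ k J))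
      ≡ ((q / p : ℕ) : ℤ) * (k : ℤ) *
          ((dgt p n (π ⟨u, by omega⟩) I : ℤ) - (dgt p n (π ⟨u, by omega⟩) J : ℤ))
        [ZMOD (q : ℤ)]) ∧
    (∑ k ∈ Finset.range p,
        zeta q ((Hval p q n π γ θ (fun i => dgt p n i I)
              - Hval p q n π γ θ (fun i => dgt p n i J))
          - (Hval p q n π γ θ (modDig p n π ⟨u + 1, by omega⟩ k I)
              - Hval p q n π γ θ (modDig p n π ⟨u + 1, by omega⟩ k J)))
      = ∑ k ∈ Finset.range p,
          zeta p ((k : ℤ) *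
            ((dgt p n (π ⟨u, by omega⟩) I : ℤ) - (dgt p n (π ⟨u, by omega⟩) J : ℤ)))) ∧
    (∑ k ∈ Finset.range p,
        zeta q ((Hval p q n π γ θ (fun i => dgt p n i I)
              - Hval p q n π γ θ (fun i => dgt p n i J))
          - (Hval p q n π γ θ (modDig p n π ⟨u + 1, by omega⟩ k I)
              - Hval p q n π γ θ (modDig p n π ⟨u + 1, by omega⟩ k J))) = 0) := by
  have hcong (k : ℕ) (hk : k ≤ p) := shiftDiff_modEq (q := q) hpq hu π γ θ hlargest hk
  have hsum := sum_range_zeta_eq_of_modEq hq.ne' hpq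
    (f := fun k ↦ shiftDiff p q n π γ θ ⟨u + 1, by omega⟩ k I J)
    (d := (dgt p n (π ⟨u, by omega⟩) I : ℤ) - dgt p n (π ⟨u, by omega⟩) J)
    fun k hk ↦ hcong k hk.le
  have hp : 0 < p := Nat.pos_of_dvd_of_pos hpq hq
  have hdI : dgt p n (π ⟨u, by omega⟩) I < p := Nat.mod_lt _ hp
  have hdJ : dgt p n (π ⟨u, by omega⟩) J < p := Nat.mod_lt _ hp
  exact ⟨fun k hk ↦ hcong k (by omega), hsum,
    hsum.trans (sum_range_zeta_mul_eq_zero (by omega) (by omega))⟩
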